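/- Let d ≥ 3. For t > 0, x, y, z ∈ ℝ^d and 0 < s < t, define the density ratio Q(t,s,x,y,z) = ((t−s)/t)^{d/2} exp(|y−z|²/(2(t−s)) − |y−x|²/(2t)). Suppose y_n ∈ ℝ^d with |y_n| → ∞, t_n → ∞, |y_n|²/t_n bounded above and below away from 0, x_n → x, and u_n → ∞ with u_n/t_n → 0. Then Q(t_n, s, x_n, y_n, z) → 1 as n → ∞, uniformly over s ∈ (0, u_n] and z in any fixed bounded subset of ℝ^d. -/

import Mathlib

open MeasureTheory Real Filter Topology ProbabilityTheory

noncomputable section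

/-- Euclidean space `ℝ^d`. -/
abbrev Euc (d : ℕ) := EuclideanSpace ℝ (Fin d)

/-- The Brownian transition density `q(s; w) = (2πs)^{-d/2} exp(-|w|²/(2s))`. -/
def heatKernel (d : ℕ) (s : ℝ) (w : Euc d) : ℝ :=
  (2 * π * s) ^ (-(d : ℝ) / 2) * Real.exp (-‖w‖ ^ 2 / (2 * s))

/-- Joint density of a Brownian motion started at `x`, at times `s 0 < s 1 < ⋯`. -/
def jointDensity (d : ℕ) {k : ℕ} (x : Euc d) (s : Fin k → ℝ) (z : Fin k → Euc d) : ℝ :=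
  ∏ j : Fin k,
    heatKernel d (s j - if (j : ℕ) = 0 then 0 else s ⟨(j : ℕ) - 1, lt_of_le_of_lt (Nat.sub_le _ _) j.isLt⟩)
      (z j - if (j : ℕ) = 0 then x else z ⟨(j : ℕ) - 1, lt_of_le_of_lt (Nat.sub_le _ _) j.isLt⟩)

/-- Joint density of the Brownian bridge from `a` to `b` in time `t`, at interior times `s`. -/
def bridgeDensity (d : ℕ) {k : ℕ} (t : ℝ) (a b : Euc d) (s : Fin k → ℝ) (z : Fin k → Euc d) : ℝ :=
  jointDensity d a (Fin.snoc s t) (Fin.snoc z b) / heatKernel d t (b - a)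

/-- The open ordered simplex `0 < s₁ < ⋯ < s_k < t`. -/
def simplex (k : ℕ) (t : ℝ) : Set (Fin k → ℝ) :=
  {s | StrictMono s ∧ ∀ i, 0 < s i ∧ s i < t}

/-- `W` is a standard `d`-dimensional Brownian motion started at `x`, characterized by
continuous paths and finite-dimensional densities given by products of heat kernels. -/
def IsBrownianMotion {Ω : Type*} [MeasureSpace Ω] {d : ℕ} (x : Euc d)
    (W : ℝ → Ω → Euc d) : Prop :=
  (∀ ω, W 0 ω = x) ∧ (∀ ω, Continuous fun s => W s ω) ∧
  ∀ (k : ℕ) (s : Fin (k + 1) → ℝ), StrictMono s → (∀ i, 0 < s i) →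
    Measure.map (fun ω (i : Fin (k + 1)) => W (s i) ω) (ℙ : Measure Ω) =
      (volume : Measure (Fin (k + 1) → Euc d)).withDensity
        (fun z => ENNReal.ofReal (jointDensity d x s z))

/-- `X` is a `d`-dimensional Brownian bridge from `a` to `b` in time `t`. -/
def IsBrownianBridge {Ω : Type*} [MeasureSpace Ω] {d : ℕ} (t : ℝ) (a b : Euc d)
    (X : ℝ → Ω → Euc d) : Prop :=
  (∀ ω, X 0 ω = a) ∧ (∀ ω, X t ω = b) ∧
  (∀ ω, ContinuousOn (fun s => X s ω) (Set.Icc 0 t)) ∧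
  ∀ (k : ℕ) (s : Fin (k + 1) → ℝ), StrictMono s → (∀ i, 0 < s i ∧ s i < t) →
    Measure.map (fun ω (i : Fin (k + 1)) => X (s i) ω) (ℙ : Measure Ω) =
      (volume : Measure (Fin (k + 1) → Euc d)).withDensity
        (fun z => ENNReal.ofReal (bridgeDensity d t a b s z))

/-- The path integral `∫₀^t v(X_s) ds`. -/
def pathInt {Ω : Type*} {d : ℕ} (v : Euc d → ℝ) (X : ℝ → Ω → Euc d) (t : ℝ) (ω : Ω) : ℝ :=
  ∫ s in Set.Ioc (0 : ℝ) t, v (X s ω)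

/-- The total path integral `∫₀^∞ v(X_s) ds`. -/
def pathIntInf {Ω : Type*} {d : ℕ} (v : Euc d → ℝ) (X : ℝ → Ω → Euc d) (ω : Ω) : ℝ :=
  ∫ s in Set.Ioi (0 : ℝ), v (X s ω)

/-- The density ratio `Q_{j} = q(t; y - x)/q(Δ_j s; Δ_j z)` with the conventions
`s₀ = 0`, `s_{k+1} = t`, `z₀ = x`, `z_{k+1} = y`. -/
def Qratio (d : ℕ) {k : ℕ} (t : ℝ) (x y : Euc d) (s : Fin k → ℝ) (z : Fin k → Euc d)
    (j : Fin (k + 1)) : ℝ :=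
  heatKernel d t (y - x) /
    heatKernel d
      ((Fin.cons 0 (Fin.snoc s t) : Fin (k + 2) → ℝ) j.succ -
        (Fin.cons 0 (Fin.snoc s t) : Fin (k + 2) → ℝ) j.castSucc)
      ((Fin.cons x (Fin.snoc z y) : Fin (k + 2) → Euc d) j.succ -
        (Fin.cons x (Fin.snoc z y) : Fin (k + 2) → Euc d) j.castSucc)

section KernelRatio

variable {E : Type*} [SeminormedAddCommGroup E]

/-- With `p = d / 2`, for `0 < t - s ≤ t` this is
`heatKernel d t (y - x) / heatKernel d (t - s) (y - z)`. -/
def kernelRatio (p t s : ℝ) (x y z : E) : ℝ :=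
  ((t - s) / t) ^ p * exp (‖y - z‖ ^ 2 / (2 * (t - s)) - ‖y - x‖ ^ 2 / (2 * t))

theorem abs_norm_sub_sq_sub_norm_sub_sq_le {x y z : E} {K : ℝ} (hK : ‖z‖ + ‖x‖ ≤ K) :
    |‖y - z‖ ^ 2 - ‖y - x‖ ^ 2| ≤ K * (2 * ‖y‖ + K) := by
  have hdiff : |‖y - z‖ - ‖y - x‖| ≤ K := by
    calc |‖y - z‖ - ‖y - x‖| ≤ ‖(y - z) - (y - x)‖ := abs_norm_sub_norm_le _ _
      _ = ‖x - z‖ := by rw [sub_sub_sub_cancel_left]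
      _ ≤ K := (norm_sub_le _ _).trans (by linarith)
  have hsum : ‖y - z‖ + ‖y - x‖ ≤ 2 * ‖y‖ + K := by
    linarith [norm_sub_le y z, norm_sub_le y x]
  rw [sq_sub_sq, abs_mul, abs_of_nonneg (by positivity : 0 ≤ ‖y - z‖ + ‖y - x‖), mul_comm]
  exact mul_le_mul hdiff hsum (by positivity) ((abs_nonneg _).trans hdiff)

theorem kernelExponent_eq {t s a b : ℝ} (ht : t ≠ 0) (hst : t - s ≠ 0) :
    a ^ 2 / (2 * (t - s)) - b ^ 2 / (2 * t) =
      (a ^ 2 - b ^ 2) / (2 * t) + a ^ 2 * s / (2 * t * (t - s)) := by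
  field_simp
  ring

theorem kernelRatio_mem_Icc {p t s u R K : ℝ} {x y z : E} (hp : 0 ≤ p) (hs : 0 ≤ s)
    (hsu : s ≤ u) (hut : u < t) (hzR : ‖z‖ ≤ R) (hK : ‖z‖ + ‖x‖ ≤ K) :
    kernelRatio p t s x y z ∈ Set.Icc
      (((t - u) / t) ^ p * exp (-(K * (2 * ‖y‖ + K) / (2 * t))))
      (exp (K * (2 * ‖y‖ + K) / (2 * t) + (‖y‖ + R) ^ 2 * u / (2 * t * (t - u)))) := by
  have ht : 0 < t := by linarith
  have hts : 0 < t - s := by linarith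
  have hdiff := abs_le.1 (abs_norm_sub_sq_sub_norm_sub_sq_le (y := y) hK)
  have hshift_nonneg : 0 ≤ ‖y - z‖ ^ 2 * s / (2 * t * (t - s)) := by positivity
  have hshift_le :
      ‖y - z‖ ^ 2 * s / (2 * t * (t - s)) ≤ (‖y‖ + R) ^ 2 * u / (2 * t * (t - u)) := by
    have hyz : ‖y - z‖ ≤ ‖y‖ + R := (norm_sub_le y z).trans (by linarith)
    have hu : 0 ≤ u := hs.trans hsu
    gcongr
  have hexp := kernelExponent_eq (a := ‖y - z‖) (b := ‖y - x‖) ht.ne' hts.ne'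
  have h2t : 0 < 2 * t := by positivity
  refine ⟨mul_le_mul ?_ (exp_le_exp.2 ?_) (exp_pos _).le (by positivity), ?_⟩
  · gcongr
  · rw [hexp, ← neg_div]
    have := div_le_div_of_nonneg_right hdiff.1 h2t.le
    linarith
  · refine (mul_le_of_le_one_left (exp_pos _).le ?_).trans (exp_le_exp.2 ?_)
    · exact rpow_le_one (by positivity) ((div_le_one ht).2 (by linarith)) hp
    · rw [hexp]
      have := div_le_div_of_nonneg_right hdiff.2 h2t.le
      linarith

end KernelRatio

section Asymptotics

variable {ι : Type*} {l : Filter ι} {a t u : ι → ℝ} {C : ℝ}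

theorem tendsto_div_of_sq_div_le (ha : Tendsto a l atTop) (hC : ∀ᶠ n in l, a n ^ 2 / t n ≤ C)
    (ht : ∀ᶠ n in l, 0 < t n) : Tendsto (fun n => a n / t n) l (𝓝 0) := by
  refine tendsto_of_tendsto_of_tendsto_of_le_of_le' tendsto_const_nhds
    ((tendsto_const_nhds (x := C)).div_atTop ha) ?_ ?_
  · filter_upwards [ha.eventually_gt_atTop 0, ht] with n ha ht
    positivity
  · filter_upwards [ha.eventually_gt_atTop 0, ht, hC] with n ha ht hC
    calc a n / t n = a n ^ 2 / t n / a n := by field_simp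
      _ ≤ C / a n := by gcongr

theorem tendsto_mul_two_add_div_two_mul (K : ℝ) (ht : Tendsto t l atTop)
    (hat : Tendsto (fun n => a n / t n) l (𝓝 0)) :
    Tendsto (fun n => K * (2 * a n + K) / (2 * t n)) l (𝓝 0) := by
  have h : Tendsto (fun n => K * (a n / t n) + K ^ 2 / 2 * (t n)⁻¹) l (𝓝 0) := by
    simpa using (hat.const_mul K).add (ht.inv_tendsto_atTop.const_mul (K ^ 2 / 2))
  refine h.congr' ?_
  filter_upwards [ht.eventually_gt_atTop 0] with n hn
  field_simp

theorem tendsto_sq_mul_div_mul_sub (R : ℝ) (ht : Tendsto t l atTop)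
    (hC : ∀ᶠ n in l, a n ^ 2 / t n ≤ C) (hut : Tendsto (fun n => u n / t n) l (𝓝 0)) :
    Tendsto (fun n => (a n + R) ^ 2 * u n / (2 * t n * (t n - u n))) l (𝓝 0) := by
  have hfrac : Tendsto (fun n => u n / t n / (2 * (1 - u n / t n))) l (𝓝 0) := by
    have h := hut.div ((tendsto_const_nhds.sub hut).const_mul 2)
      (by norm_num : (2 : ℝ) * (1 - 0) ≠ 0)
    rwa [zero_div] at h
  have hbdd : IsBoundedUnder (· ≤ ·) l (fun n => ‖(a n + R) ^ 2 / t n‖) := by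
    refine isBoundedUnder_of_eventually_le (a := 2 * C + 2 * R ^ 2) ?_
    filter_upwards [ht.eventually_ge_atTop 1, hC] with n ht1 hCn
    have htpos : 0 < t n := by linarith
    rw [Real.norm_of_nonneg (by positivity), div_le_iff₀ htpos]
    rw [div_le_iff₀ htpos] at hCn
    nlinarith [sq_nonneg (a n - R), sq_nonneg R]
  refine (hfrac.zero_mul_isBoundedUnder_le hbdd).congr' ?_
  filter_upwards [ht.eventually_gt_atTop 0, hut.eventually (gt_mem_nhds one_pos)] with n htn hun
  have : t n - u n ≠ 0 := by
    rw [div_lt_one htn] at hun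
    linarith
  field_simp

theorem tendsto_sub_div_rpow (p : ℝ) (ht : Tendsto t l atTop)
    (hut : Tendsto (fun n => u n / t n) l (𝓝 0)) :
    Tendsto (fun n => ((t n - u n) / t n) ^ p) l (𝓝 1) := by
  have h : Tendsto (fun n => 1 - u n / t n) l (𝓝 1) := by
    simpa using tendsto_const_nhds.sub hut
  have hp : Tendsto (fun n => (1 - u n / t n) ^ p) l (𝓝 1) := by
    simpa using h.rpow_const (p := p) (Or.inl one_ne_zero)
  refine hp.congr' ?_
  filter_upwards [ht.eventually_gt_atTop 0] with n hn
  rw [sub_div, div_self hn.ne']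

end Asymptotics

theorem stmt17_general (d : ℕ)
    (x : Euc d) (xn yn : ℕ → Euc d) (tn un : ℕ → ℝ)
    (hxn : Tendsto xn atTop (𝓝 x))
    (hyn : Tendsto (fun n => ‖yn n‖) atTop atTop)
    (htn : Tendsto tn atTop atTop)
    (hratio : ∃ c C : ℝ, 0 < c ∧ ∀ n, c ≤ ‖yn n‖ ^ 2 / tn n ∧ ‖yn n‖ ^ 2 / tn n ≤ C)
    (huntn : Tendsto (fun n => un n / tn n) atTop (𝓝 0))
    (B : Set (Euc d)) (hB : Bornology.IsBounded B) :
    ∀ ε : ℝ, 0 < ε → ∀ᶠ n in atTop, ∀ s ∈ Set.Ioc (0 : ℝ) (un n), ∀ z ∈ B,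
      |((tn n - s) / tn n) ^ ((d : ℝ) / 2) *
          Real.exp (‖yn n - z‖ ^ 2 / (2 * (tn n - s)) - ‖yn n - xn n‖ ^ 2 / (2 * tn n))
        - 1| < ε := by
  obtain ⟨R, hR⟩ := hB.exists_norm_le
  obtain ⟨_, C, _, hC⟩ := hratio
  set K := R + ‖x‖ + 1
  have hCn : ∀ᶠ n in atTop, ‖yn n‖ ^ 2 / tn n ≤ C := .of_forall fun n => (hC n).2
  have hβ := tendsto_mul_two_add_div_two_mul K htn
    (tendsto_div_of_sq_div_le hyn hCn (htn.eventually_gt_atTop 0))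
  have hlower : Tendsto (fun n => ((tn n - un n) / tn n) ^ ((d : ℝ) / 2) *
      exp (-(K * (2 * ‖yn n‖ + K) / (2 * tn n)))) atTop (𝓝 1) := by
    simpa using (tendsto_sub_div_rpow _ htn huntn).mul hβ.neg.rexp
  have hupper : Tendsto (fun n => exp (K * (2 * ‖yn n‖ + K) / (2 * tn n) +
      (‖yn n‖ + R) ^ 2 * un n / (2 * tn n * (tn n - un n)))) atTop (𝓝 1) := by
    simpa using (hβ.add (tendsto_sq_mul_div_mul_sub R htn hCn huntn)).rexp
  intro ε hε
  filter_upwards [hlower.eventually (lt_mem_nhds (sub_lt_self 1 hε)),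
    hupper.eventually (gt_mem_nhds (lt_add_of_pos_right 1 hε)),
    hxn.norm.eventually (gt_mem_nhds (lt_add_one ‖x‖)), htn.eventually_gt_atTop 0,
    huntn.eventually (gt_mem_nhds one_pos)] with n hlo hup hxn' ht hut s hs z hz
  have hu : un n < tn n := by rwa [div_lt_one ht] at hut
  obtain ⟨hL, hU⟩ := kernelRatio_mem_Icc (K := K) (x := xn n) (y := yn n)
    (by positivity : 0 ≤ (d : ℝ) / 2) hs.1.le hs.2 hu (hR z hz) (by linarith [hR z hz])
  unfold kernelRatio at hL hU
  rw [abs_sub_lt_iff]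
  constructor <;> linarith

/-- The kernel-ratio estimate in the proof of Theorem 2: `Q(t_n, s, x_n, y_n, z) → 1`
uniformly over `s ∈ (0, u_n]` and `z` in a fixed bounded set. -/
theorem stmt17 (d : ℕ) (hd : 3 ≤ d)
    (x : Euc d) (xn yn : ℕ → Euc d) (tn un : ℕ → ℝ)
    (hxn : Tendsto xn atTop (𝓝 x))
    (hyn : Tendsto (fun n => ‖yn n‖) atTop atTop)
    (htn : Tendsto tn atTop atTop)
    (hratio : ∃ c C : ℝ, 0 < c ∧ ∀ n, c ≤ ‖yn n‖ ^ 2 / tn n ∧ ‖yn n‖ ^ 2 / tn n ≤ C)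
    (hun : Tendsto un atTop atTop) (huntn : Tendsto (fun n => un n / tn n) atTop (𝓝 0))
    (B : Set (Euc d)) (hB : Bornology.IsBounded B) :
    ∀ ε : ℝ, 0 < ε → ∀ᶠ n in atTop, ∀ s ∈ Set.Ioc (0 : ℝ) (un n), ∀ z ∈ B,
      |((tn n - s) / tn n) ^ ((d : ℝ) / 2) *
          Real.exp (‖yn n - z‖ ^ 2 / (2 * (tn n - s)) - ‖yn n - xn n‖ ^ 2 / (2 * tn n))
        - 1| < ε :=
  stmt17_general d x xn yn tn un hxn hyn htn hratio huntn B hB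

end
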